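/- Let ξ₁,…,ξₙ be independent mean-zero random vectors in ℝ^d with finite fourth moments, W := Σ_{u=1}^n ξ_u, Σ_W := Var(W), and for each i set W^{(i)} := W − ξᵢ. Then for every i = 1,…,n, almost surely: E[(ξᵢ · W^{(i)})² | ξᵢ] ≤ ξᵢᵀ Σ_W ξᵢ, and E[(ξᵢ · W^{(i)})⁴ | ξᵢ] ≤ |ξᵢ|⁴ Σ_{u=1}^n E[|ξ_u|⁴] + 3 (ξᵢᵀ Σ_W ξᵢ)². -/

import Mathlib

/-!
Given `ξᵢ = x`, the vector `W⁽ⁱ⁾ = ∑_{u ≠ i} ξ_u` is independent of `ξᵢ`, so both conditional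
moments are unconditional moments of `⟪x, W⁽ⁱ⁾⟫`, evaluated at `x = ξᵢ`. For fixed `x` the
summands `⟪x, ξ_u⟫` are independent and centred: the second moment of their sum over `u ≠ i` is a
sum of variances, hence at most `Var ⟪x, W⟫ = xᵀ Σ_W x`. For the fourth moment, adding one more
independent centred summand `η` to `S` gives `E (S + η)⁴ = E S⁴ + 6 E S² E η² + E η⁴` (the odd
cross terms vanish), so by induction `E S⁴ ≤ ∑ E η_u⁴ + 3 (∑ E η_u²)²`; finally
`E ⟪x, ξ_u⟫⁴ ≤ |x|⁴ E |ξ_u|⁴`.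
-/

open MeasureTheory ProbabilityTheory Real Matrix Filter
open scoped ENNReal NNReal Topology RealInnerProductSpace

noncomputable section

namespace Paper

/-- `Ψ(x) = x (|log x| ∨ 1)`. -/
def Psi (x : ℝ) : ℝ := x * max |Real.log x| 1

/-- Hilbert–Schmidt (Frobenius) norm of a matrix. -/
def hsNorm {d : ℕ} (M : Matrix (Fin d) (Fin d) ℝ) : ℝ :=
  Real.sqrt (∑ j, ∑ k, M j k ^ 2)

/-- Operator norm of a matrix, acting on Euclidean space. -/
def opNorm {d : ℕ} (M : Matrix (Fin d) (Fin d) ℝ) : ℝ :=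
  ‖LinearMap.toContinuousLinearMap (Matrix.toEuclideanLin M)‖

/-- Multiplication of a Euclidean vector by a matrix. -/
def mulVecE {d : ℕ} (M : Matrix (Fin d) (Fin d) ℝ) (x : EuclideanSpace ℝ (Fin d)) :
    EuclideanSpace ℝ (Fin d) :=
  (WithLp.equiv 2 (Fin d → ℝ)).symm (M.mulVec ((WithLp.equiv 2 (Fin d → ℝ)) x))

/-- Covariance matrix of a random vector. -/
def covMatrix {d : ℕ} {Ω : Type*} [MeasurableSpace Ω] (μ : Measure Ω)
    (Y : Ω → EuclideanSpace ℝ (Fin d)) : Matrix (Fin d) (Fin d) ℝ :=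
  Matrix.of fun j k =>
    (∫ ω, Y ω j * Y ω k ∂μ) - (∫ ω, Y ω j ∂μ) * (∫ ω, Y ω k ∂μ)

/-- The standard Gaussian distribution `N(0, I_d)` on `ℝ^d`. -/
def stdGaussian (d : ℕ) : Measure (EuclideanSpace ℝ (Fin d)) :=
  (Measure.pi fun _ : Fin d => gaussianReal 0 1).map
    (WithLp.equiv 2 (Fin d → ℝ)).symm

/-- The centered Gaussian distribution `N(0, S)` on `ℝ^d` for a positive semidefinite `S`,
realized as the pushforward of the standard Gaussian by the square root of `S`. -/
def gaussianOf {d : ℕ} {S : Matrix (Fin d) (Fin d) ℝ} (hS : S.PosSemidef) :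
    Measure (EuclideanSpace ℝ (Fin d)) :=
  (stdGaussian d).map (mulVecE (hS.1.eigenvectorUnitary.1 *
    diagonal ((RCLike.ofReal : ℝ → ℝ) ∘ Real.sqrt ∘ hS.1.eigenvalues) *
    (star hS.1.eigenvectorUnitary : Matrix (Fin d) (Fin d) ℝ)))

/-- The largest eigenvalue of a symmetric matrix. -/
def lambdaMax {d : ℕ} {A : Matrix (Fin d) (Fin d) ℝ} (hA : A.IsHermitian) : ℝ :=
  ⨆ i, hA.eigenvalues i

/-- `Λ₁(A) = √(∑_{j=1}^d λ_j(A)²)` for the eigenvalues `λ₁(A) ≥ ⋯ ≥ λ_d(A)`. -/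
def Lambda1 {d : ℕ} {A : Matrix (Fin d) (Fin d) ℝ} (hA : A.IsHermitian) : ℝ :=
  Real.sqrt (∑ i, hA.eigenvalues i ^ 2)

/-- `Λ₂(A) = √(∑_{j=2}^d λ_j(A)²)` for the eigenvalues `λ₁(A) ≥ ⋯ ≥ λ_d(A)`. -/
def Lambda2 {d : ℕ} {A : Matrix (Fin d) (Fin d) ℝ} (hA : A.IsHermitian) : ℝ :=
  Real.sqrt ((∑ i, hA.eigenvalues i ^ 2) - lambdaMax hA ^ 2)

/-- `κ(A) = (Λ₁(A) Λ₂(A))^{-1/2}`. -/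
def kappa {d : ℕ} {A : Matrix (Fin d) (Fin d) ℝ} (hA : A.IsHermitian) : ℝ :=
  (Lambda1 hA * Lambda2 hA) ^ (-(1 : ℝ) / 2)

section Moments

variable {Ω : Type*} [MeasurableSpace Ω] {μ : Measure Ω}

lemma memLp_of_integrable_norm_pow {E : Type*} [NormedAddCommGroup E] {f : Ω → E} {p : ℕ}
    (hp : p ≠ 0) (hf : AEStronglyMeasurable f μ) (hint : Integrable (fun ω => ‖f ω‖ ^ p) μ) :
    MemLp f p μ := by
  rw [← integrable_norm_rpow_iff hf (by exact_mod_cast hp) (by simp)]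
  simpa using hint

lemma _root_.MeasureTheory.MemLp.integrable_pow_of_le [IsFiniteMeasure μ] {f : Ω → ℝ}
    {p k : ℕ} (hf : MemLp f p μ) (hk : k ≤ p) : Integrable (fun ω => f ω ^ k) μ := by
  refine (integrable_norm_iff (f := fun ω => f ω ^ k) (hf.1.pow k)).1 ?_
  simpa only [norm_pow] using (hf.mono_exponent (by exact_mod_cast hk)).integrable_norm_pow'

variable [IsProbabilityMeasure μ]

theorem _root_.ProbabilityTheory.IndepFun.integral_add_pow_four {X Y : Ω → ℝ}
    (hXY : IndepFun X Y μ) (hX : MemLp X 4 μ) (hY : MemLp Y 4 μ) (hX0 : ∫ ω, X ω ∂μ = 0)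
    (hY0 : ∫ ω, Y ω ∂μ = 0) :
    ∫ ω, (X ω + Y ω) ^ 4 ∂μ
      = ∫ ω, X ω ^ 4 ∂μ + 6 * (∫ ω, X ω ^ 2 ∂μ) * (∫ ω, Y ω ^ 2 ∂μ) + ∫ ω, Y ω ^ 4 ∂μ := by
  have hpow (a b : ℕ) : IndepFun (fun ω => X ω ^ a) (fun ω => Y ω ^ b) μ :=
    hXY.comp (measurable_id.pow_const a) (measurable_id.pow_const b)
  have hmul (a b : ℕ) (ha : a ≤ 4) (hb : b ≤ 4) :
      ∫ ω, X ω ^ a * Y ω ^ b ∂μ = (∫ ω, X ω ^ a ∂μ) * ∫ ω, Y ω ^ b ∂μ :=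
    (hpow a b).integral_fun_mul_eq_mul_integral (hX.integrable_pow_of_le ha).1
      (hY.integrable_pow_of_le hb).1
  have hterm (k : ℕ) (hk : k ∈ Finset.range 5) :
      Integrable (fun ω => X ω ^ k * Y ω ^ (4 - k) * (Nat.choose 4 k : ℝ)) μ := by
    have hk : k ≤ 4 := Nat.lt_succ_iff.1 (Finset.mem_range.1 hk)
    exact ((hpow k (4 - k)).integrable_mul (hX.integrable_pow_of_le hk)
      (hY.integrable_pow_of_le (Nat.sub_le 4 k))).mul_const _
  simp_rw [add_pow]
  rw [integral_finsetSum _ hterm]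
  simp only [Finset.sum_range_succ, Finset.sum_range_zero, integral_mul_const]
  rw [hmul 0 4 (by norm_num) le_rfl, hmul 1 3 (by norm_num) (by norm_num),
    hmul 2 2 (by norm_num) (by norm_num), hmul 3 1 (by norm_num) (by norm_num),
    hmul 4 0 le_rfl (by norm_num)]
  simp only [pow_zero, pow_one, hX0, hY0, integral_const, probReal_univ, smul_eq_mul,
    Nat.choose]
  norm_num
  ring

variable {ι : Type*} {f : ι → Ω → ℝ}

lemma integral_sum_sq_of_iIndepFun (hindep : iIndepFun f μ) (hL2 : ∀ u, MemLp (f u) 2 μ)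
    (hmean : ∀ u, ∫ ω, f u ω ∂μ = 0) (s : Finset ι) :
    ∫ ω, (∑ u ∈ s, f u ω) ^ 2 ∂μ = ∑ u ∈ s, ∫ ω, f u ω ^ 2 ∂μ := by
  have hsum_mean : ∫ ω, (∑ u ∈ s, f u) ω ∂μ = 0 := by
    simp only [Finset.sum_apply]
    rw [integral_finsetSum _ fun u _ => (hL2 u).integrable one_le_two]
    simp [hmean]
  have hvar := IndepFun.variance_sum (s := s) (fun u _ => hL2 u)
    fun u _ v _ huv => hindep.indepFun huv
  rw [variance_of_integral_eq_zero (memLp_finsetSum' s fun u _ => hL2 u).1.aemeasurable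
    hsum_mean] at hvar
  simpa only [Finset.sum_apply, variance_of_integral_eq_zero (hL2 _).1.aemeasurable (hmean _)]
    using hvar

lemma integral_sum_sq_le_of_subset (hindep : iIndepFun f μ) (hL2 : ∀ u, MemLp (f u) 2 μ)
    (hmean : ∀ u, ∫ ω, f u ω ∂μ = 0) {s t : Finset ι} (hst : s ⊆ t) :
    ∫ ω, (∑ u ∈ s, f u ω) ^ 2 ∂μ ≤ ∫ ω, (∑ u ∈ t, f u ω) ^ 2 ∂μ := by
  simp only [integral_sum_sq_of_iIndepFun hindep hL2 hmean]
  exact Finset.sum_le_sum_of_subset_of_nonneg hst fun u _ _ =>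
    integral_nonneg fun ω => sq_nonneg _

lemma integral_sum_pow_four_le (hindep : iIndepFun f μ)
    (hL4 : ∀ u, MemLp (f u) 4 μ) (hmean : ∀ u, ∫ ω, f u ω ∂μ = 0) (s : Finset ι) :
    ∫ ω, (∑ u ∈ s, f u ω) ^ 4 ∂μ
      ≤ ∑ u ∈ s, ∫ ω, f u ω ^ 4 ∂μ + 3 * (∑ u ∈ s, ∫ ω, f u ω ^ 2 ∂μ) ^ 2 := by
  have hL2 u : MemLp (f u) 2 μ := (hL4 u).mono_exponent (by norm_num)
  induction s using Finset.cons_induction with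
  | empty => simp
  | cons i s hi ih =>
    have hindep_sum : IndepFun (f i) (fun ω => ∑ u ∈ s, f u ω) μ := by
      simpa only [Finset.sum_fn] using
        (hindep.indepFun_finsetSum_of_notMem₀ (fun u => (hL4 u).1.aemeasurable) hi).symm
    have hsum_mean : ∫ ω, ∑ u ∈ s, f u ω ∂μ = 0 := by
      rw [integral_finsetSum _ fun u _ => (hL4 u).integrable (by norm_num)]
      simp [hmean]
    simp only [Finset.sum_cons]
    rw [hindep_sum.integral_add_pow_four (hL4 i) (memLp_finsetSum s fun u _ => hL4 u) (hmean i)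
      hsum_mean, integral_sum_sq_of_iIndepFun hindep hL2 hmean]
    nlinarith [ih, sq_nonneg (∫ ω, f i ω ^ 2 ∂μ)]

end Moments

theorem _root_.ProbabilityTheory.IndepFun.condExp_comp_ae_eq_integral {Ω β γ F : Type*}
    {mΩ : MeasurableSpace Ω} {mβ : MeasurableSpace β} {mγ : MeasurableSpace γ}
    [StandardBorelSpace γ] [Nonempty γ] [NormedAddCommGroup F] [NormedSpace ℝ F]
    [CompleteSpace F] {μ : Measure Ω} [IsFiniteMeasure μ] {X : Ω → β} {Y : Ω → γ}
    (hXY : IndepFun X Y μ) (hX : Measurable X) (hY : AEMeasurable Y μ) {f : β × γ → F}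
    (hf : StronglyMeasurable f)
    (hint : Integrable (fun ω => f (X ω, Y ω)) μ) :
    μ[fun ω => f (X ω, Y ω) | mβ.comap X] =ᵐ[μ] fun ω => ∫ ω', f (X ω, Y ω') ∂μ := by
  have hcondDistrib : condDistrib Y X μ =ᵐ[μ.map X] Kernel.const β (μ.map Y) := by
    refine condDistrib_ae_eq_of_measure_eq_compProd X hY ?_
    rw [Measure.compProd_const]
    exact (indepFun_iff_map_prod_eq_prod_map_map hX.aemeasurable hY).mp hXY
  filter_upwards [condExp_prod_ae_eq_integral_condDistrib hX hY hf hint,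
    ae_of_ae_map hX.aemeasurable hcondDistrib] with ω hω hω'
  rw [hω, hω', Kernel.const_apply, integral_map hY]
  exact (hf.comp_measurable measurable_prodMk_left).aestronglyMeasurable

section InnerMoments

variable {Ω E ι : Type*} [MeasurableSpace Ω] {μ : Measure Ω}
  [NormedAddCommGroup E] [InnerProductSpace ℝ E] {ξ : ι → Ω → E}

lemma _root_.ProbabilityTheory.iIndepFun.inner_left [MeasurableSpace E] [BorelSpace E]
    (hindep : iIndepFun ξ μ) (x : E) :
    iIndepFun (fun u ω => ⟪x, ξ u ω⟫) μ :=
  hindep.comp _ fun _ => (continuous_const.inner continuous_id).measurable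

lemma integral_inner_left_eq_zero [CompleteSpace E] {X : Ω → E} (hX : Integrable X μ)
    (hmean : ∫ ω, X ω ∂μ = 0) (x : E) : ∫ ω, ⟪x, X ω⟫ ∂μ = 0 := by
  rw [integral_inner hX, hmean, inner_zero_right]

lemma _root_.MeasureTheory.MemLp.inner_left {X : Ω → E} {p : ℝ≥0∞} (hX : MemLp X p μ)
    (x : E) :
    MemLp (fun ω => ⟪x, X ω⟫) p μ :=
  hX.continuousLinearMap_comp (innerSL ℝ x)

lemma integral_inner_pow_four_le [IsFiniteMeasure μ] {X : Ω → E} (hX : MemLp X 4 μ) (x : E) :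
    ∫ ω, ⟪x, X ω⟫ ^ 4 ∂μ ≤ ‖x‖ ^ 4 * ∫ ω, ‖X ω‖ ^ 4 ∂μ := by
  rw [← integral_const_mul]
  refine integral_mono ((hX.inner_left x).integrable_pow_of_le le_rfl)
    (hX.integrable_norm_pow'.const_mul _) fun ω => ?_
  calc ⟪x, X ω⟫ ^ 4 = |⟪x, X ω⟫| ^ 4 := (Even.pow_abs ⟨2, rfl⟩ _).symm
    _ ≤ (‖x‖ * ‖X ω‖) ^ 4 := by gcongr; exact abs_real_inner_le_norm _ _
    _ = ‖x‖ ^ 4 * ‖X ω‖ ^ 4 := mul_pow _ _ _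

variable [IsProbabilityMeasure μ] [MeasurableSpace E] [BorelSpace E] [CompleteSpace E]
  [Fintype ι]

lemma integral_inner_sum_sq_le_variance (hindep : iIndepFun ξ μ) (hL2 : ∀ u, MemLp (ξ u) 2 μ)
    (hmean : ∀ u, ∫ ω, ξ u ω ∂μ = 0) (x : E) (s : Finset ι) :
    ∫ ω, ⟪x, ∑ u ∈ s, ξ u ω⟫ ^ 2 ∂μ ≤ Var[fun ω => ⟪x, ∑ u, ξ u ω⟫; μ] := by
  have hη2 u := (hL2 u).inner_left x
  have hη0 u := integral_inner_left_eq_zero ((hL2 u).integrable one_le_two) (hmean u) x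
  simp_rw [inner_sum]
  rw [variance_of_integral_eq_zero (memLp_finsetSum _ fun u _ => hη2 u).1.aemeasurable
    (by rw [integral_finsetSum _ fun u _ => (hη2 u).integrable one_le_two]; simp [hη0])]
  exact integral_sum_sq_le_of_subset (hindep.inner_left x) hη2 hη0 s.subset_univ

lemma integral_inner_sum_pow_four_le (hindep : iIndepFun ξ μ) (hL4 : ∀ u, MemLp (ξ u) 4 μ)
    (hmean : ∀ u, ∫ ω, ξ u ω ∂μ = 0) (x : E) (s : Finset ι) :
    ∫ ω, ⟪x, ∑ u ∈ s, ξ u ω⟫ ^ 4 ∂μ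
      ≤ ‖x‖ ^ 4 * (∑ u, ∫ ω, ‖ξ u ω‖ ^ 4 ∂μ)
        + 3 * Var[fun ω => ⟪x, ∑ u, ξ u ω⟫; μ] ^ 2 := by
  have hL2 u : MemLp (ξ u) 2 μ := (hL4 u).mono_exponent (by norm_num)
  have hη4 u := (hL4 u).inner_left x
  have hη2 u := (hL2 u).inner_left x
  have hη0 u := integral_inner_left_eq_zero ((hL2 u).integrable one_le_two) (hmean u) x
  have hsq := integral_inner_sum_sq_le_variance hindep hL2 hmean x s
  simp_rw [inner_sum] at hsq ⊢
  rw [integral_sum_sq_of_iIndepFun (hindep.inner_left x) hη2 hη0] at hsq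
  calc ∫ ω, (∑ u ∈ s, ⟪x, ξ u ω⟫) ^ 4 ∂μ
      ≤ ∑ u ∈ s, ∫ ω, ⟪x, ξ u ω⟫ ^ 4 ∂μ + 3 * (∑ u ∈ s, ∫ ω, ⟪x, ξ u ω⟫ ^ 2 ∂μ) ^ 2 :=
        integral_sum_pow_four_le (hindep.inner_left x) hη4 hη0 s
    _ ≤ ∑ u, ‖x‖ ^ 4 * ∫ ω, ‖ξ u ω‖ ^ 4 ∂μ + 3 * Var[fun ω => ∑ u, ⟪x, ξ u ω⟫; μ] ^ 2 := by
        gcongr ?_ + 3 * ?_ ^ 2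
        calc ∑ u ∈ s, ∫ ω, ⟪x, ξ u ω⟫ ^ 4 ∂μ ≤ ∑ u, ∫ ω, ⟪x, ξ u ω⟫ ^ 4 ∂μ :=
              Finset.sum_le_sum_of_subset_of_nonneg s.subset_univ
                fun u _ _ => integral_nonneg fun ω => by positivity
          _ ≤ _ := Finset.sum_le_sum fun u _ => integral_inner_pow_four_le (hL4 u) x
    _ = _ := by rw [Finset.mul_sum]

end InnerMoments

section CondExp

variable {Ω E ι : Type*} [MeasurableSpace Ω] {μ : Measure Ω} [IsFiniteMeasure μ]
  [NormedAddCommGroup E] [InnerProductSpace ℝ E] [MeasurableSpace E] [BorelSpace E]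
  [SecondCountableTopology E] [CompleteSpace E] [Fintype ι] [DecidableEq ι] {ξ : ι → Ω → E}

lemma condExp_inner_sum_sub_pow_ae_eq (hmeas : ∀ u, Measurable (ξ u)) (hindep : iIndepFun ξ μ)
    {k : ℕ} (hLk : ∀ u, MemLp (ξ u) k μ) (i : ι) :
    μ[fun ω' => ⟪ξ i ω', (∑ u, ξ u ω') - ξ i ω'⟫ ^ k |
        MeasurableSpace.comap (ξ i) inferInstance]
      =ᵐ[μ] fun ω => ∫ ω', ⟪ξ i ω, ∑ u ∈ Finset.univ.erase i, ξ u ω'⟫ ^ k ∂μ := by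
  simp_rw [← Finset.sum_erase_eq_sub (Finset.mem_univ i)]
  set Y := fun ω => ∑ u ∈ Finset.univ.erase i, ξ u ω
  have hXY : IndepFun (ξ i) Y μ := by
    simpa only [Finset.sum_fn] using
      (hindep.indepFun_finsetSum_of_notMem hmeas (Finset.notMem_erase i Finset.univ)).symm
  have hYm : Measurable Y := Finset.measurable_sum _ fun u _ => hmeas u
  have hYk : MemLp Y k μ := memLp_finsetSum _ fun u _ => hLk u
  have hf : StronglyMeasurable fun p : E × E => ⟪p.1, p.2⟫ ^ k :=
    ((continuous_fst.inner continuous_snd).pow k).stronglyMeasurable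
  refine hXY.condExp_comp_ae_eq_integral (hmeas i) hYm.aemeasurable hf ?_
  have hnorms : IndepFun (fun ω => ‖ξ i ω‖ ^ k) (fun ω => ‖Y ω‖ ^ k) μ :=
    hXY.comp (measurable_norm.pow_const k) (measurable_norm.pow_const k)
  refine (hnorms.integrable_mul (hLk i).integrable_norm_pow' hYk.integrable_norm_pow').mono'
    (hf.comp_measurable ((hmeas i).prodMk hYm)).aestronglyMeasurable (ae_of_all _ fun ω => ?_)
  simp only [norm_pow, Real.norm_eq_abs, Pi.mul_apply, ← mul_pow]
  exact pow_le_pow_left₀ (abs_nonneg _) (abs_real_inner_le_norm _ _) k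

end CondExp

section Covariance

variable {Ω : Type*} [MeasurableSpace Ω] {μ : Measure Ω} [IsProbabilityMeasure μ]

lemma inner_mulVecE_covMatrix {d : ℕ} {Y : Ω → EuclideanSpace ℝ (Fin d)} (hY : MemLp Y 2 μ)
    (x : EuclideanSpace ℝ (Fin d)) :
    ⟪x, mulVecE (covMatrix μ Y) x⟫ = Var[fun ω => ⟪x, Y ω⟫; μ] := by
  have hYj (j : Fin d) : MemLp (fun ω => Y ω j) 2 μ :=
    hY.continuousLinearMap_comp (EuclideanSpace.proj (𝕜 := ℝ) j)
  have hinner (y : EuclideanSpace ℝ (Fin d)) : ⟪x, y⟫ = ∑ j, x j * y j := by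
    simp [PiLp.inner_apply, mul_comm]
  have hcov (j k : Fin d) : covMatrix μ Y j k = cov[fun ω => Y ω j, fun ω => Y ω k; μ] :=
    (covariance_eq_sub (hYj j) (hYj k)).symm
  simp_rw [hinner]
  have hterm (j : Fin d) : MemLp (fun ω => x j * Y ω j) 2 μ := (hYj j).const_mul (x j)
  rw [← covariance_self (memLp_finsetSum _ fun j _ => hterm j).1.aemeasurable,
    covariance_fun_sum_fun_sum hterm hterm]
  simp only [covariance_const_mul_left, covariance_const_mul_right, mulVecE, WithLp.equiv_apply,
    WithLp.equiv_symm_apply, mulVec, dotProduct, hcov, Finset.mul_sum]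
  exact Finset.sum_congr rfl fun j _ => Finset.sum_congr rfl fun k _ => by ring

end Covariance

/-- Lemma `portnoy`: conditional second- and fourth-moment bounds for
`ξᵢ · W^{(i)}` given `ξᵢ`, where `W^{(i)} = W - ξᵢ`. -/
theorem portnoy_lemma
    {d n : ℕ} {Ω : Type} [MeasurableSpace Ω] (μ : Measure Ω) [IsProbabilityMeasure μ]
    (ξ : Fin n → Ω → EuclideanSpace ℝ (Fin d))
    (hmeas : ∀ i, Measurable (ξ i))
    (hindep : iIndepFun ξ μ)
    (hmean : ∀ i, ∫ ω, ξ i ω ∂μ = 0)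
    (hmom : ∀ i, Integrable (fun ω => ‖ξ i ω‖ ^ 4) μ)
    (i : Fin n) :
    (∀ᵐ ω ∂μ,
      (μ[fun ω' => ⟪ξ i ω', (∑ u, ξ u ω') - ξ i ω'⟫ ^ 2 |
          MeasurableSpace.comap (ξ i) inferInstance]) ω ≤
        ⟪ξ i ω, mulVecE (covMatrix μ (fun ω' => ∑ u, ξ u ω')) (ξ i ω)⟫) ∧
    (∀ᵐ ω ∂μ,
      (μ[fun ω' => ⟪ξ i ω', (∑ u, ξ u ω') - ξ i ω'⟫ ^ 4 |
          MeasurableSpace.comap (ξ i) inferInstance]) ω ≤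
        ‖ξ i ω‖ ^ 4 * (∑ u, ∫ ω', ‖ξ u ω'‖ ^ 4 ∂μ) +
          3 * ⟪ξ i ω, mulVecE (covMatrix μ (fun ω' => ∑ u, ξ u ω')) (ξ i ω)⟫ ^ 2) := by
  have hL4 u : MemLp (ξ u) 4 μ :=
    memLp_of_integrable_norm_pow four_ne_zero (hmeas u).aestronglyMeasurable (hmom u)
  have hL2 u : MemLp (ξ u) 2 μ := (hL4 u).mono_exponent (by norm_num)
  have hW2 : MemLp (fun ω => ∑ u, ξ u ω) 2 μ := memLp_finsetSum _ fun u _ => hL2 u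
  constructor
  · filter_upwards [condExp_inner_sum_sub_pow_ae_eq hmeas hindep hL2 i] with ω hω
    rw [hω, inner_mulVecE_covMatrix hW2]
    exact integral_inner_sum_sq_le_variance hindep hL2 hmean _ _
  · filter_upwards [condExp_inner_sum_sub_pow_ae_eq hmeas hindep hL4 i] with ω hω
    rw [hω, inner_mulVecE_covMatrix hW2]
    exact integral_inner_sum_pow_four_le hindep hL4 hmean _ _

end Paper
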